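/- arXiv:2002.12414 — 2 statements merged into one kernel-verified Lean document; each statement's English description precedes it below -/
import Mathlib

section
/- Let H ∈ ℝ^{d×d} be symmetric with all eigenvalues in [μ, L], 0 < μ ≤ L, let α > 0, β ∈ ℝ, and let A = [[I − α(1+β)H, β²I], [−αH, βI]] ∈ ℝ^{2d×2d}. Then the spectral (operator 2-) norm of A satisfies ‖A‖ ≤ R(α, β) = max_{λ ∈ [μ, L]} R_λ(α, β). -/
/-!
In the eigenbasis of `H`, used on both halves of `ℝ^{2d}`, the four blocks of `A` become
diagonal, so `A` is orthogonally equivalent to a direct sum of the `2 × 2` matrices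
`[[1 − α(1+β)λ, β²], [−αλ, β]]`, one for each eigenvalue `λ` of `H`. Its norm is the largest
norm of these, and `R_λ(α, β)` is exactly the largest singular value of the block for `λ`:
`C_λ` is its squared Frobenius norm and `β(1 − αλ)` its determinant.
-/

open Matrix

/-- The spectral (operator 2-) norm of a real matrix, i.e. its largest singular value:
the operator norm of the induced linear map between Euclidean spaces. -/
noncomputable def spectralNorm2 {m n : Type*} [Fintype m] [Fintype n] [DecidableEq n]
    (A : Matrix m n ℝ) : ℝ :=
  ‖LinearMap.toContinuousLinearMap (Matrix.toEuclideanLin A)‖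

/-- `C_λ(α, β)`. -/
noncomputable def Clam (α β lam : ℝ) : ℝ :=
  (1 - α * (1 + β) * lam) ^ 2 + α ^ 2 * lam ^ 2 + β ^ 2 * (β ^ 2 + 1)

/-- `R_λ(α, β) = (1/√2)(C_λ + √(C_λ² − 4β²(1−αλ)²))^{1/2}`. -/
noncomputable def Rlam (α β lam : ℝ) : ℝ :=
  (1 / Real.sqrt 2) *
    Real.sqrt (Clam α β lam +
      Real.sqrt ((Clam α β lam) ^ 2 - 4 * β ^ 2 * (1 - α * lam) ^ 2))

open scoped Matrix.Norms.L2Operator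

theorem quadForm_le_maxEigenvalue (p q r u v : ℝ) :
    p * u ^ 2 + 2 * r * u * v + q * v ^ 2
      ≤ (p + q + √((p - q) ^ 2 + 4 * r ^ 2)) / 2 * (u ^ 2 + v ^ 2) := by
  have hw0 : 0 ≤ √((p - q) ^ 2 + 4 * r ^ 2) := Real.sqrt_nonneg _
  have hw2 : √((p - q) ^ 2 + 4 * r ^ 2) ^ 2 = (p - q) ^ 2 + 4 * r ^ 2 :=
    Real.sq_sqrt (by positivity)
  generalize √((p - q) ^ 2 + 4 * r ^ 2) = w at hw0 hw2 ⊢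
  rcases hw0.eq_or_lt with rfl | hw
  · obtain rfl : r = 0 := by nlinarith [sq_nonneg r, sq_nonneg (p - q)]
    obtain rfl : p = q := by nlinarith [sq_nonneg (p - q)]
    linarith
  · -- `X = (q - p + w) / 2` and `Y = (p - q + w) / 2` satisfy `X * Y = r ^ 2` and `X + Y = w`,
    -- so `w * (X u² - 2 r u v + Y v²) = (X u - r v)² + (Y v - r u)²`.
    have key : 0 ≤ w * ((q - p + w) / 2 * u ^ 2 - 2 * r * u * v + (p - q + w) / 2 * v ^ 2) := by
      nlinarith [sq_nonneg ((q - p + w) / 2 * u - r * v),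
        sq_nonneg ((p - q + w) / 2 * v - r * u)]
    nlinarith [(mul_nonneg_iff_of_pos_left hw).mp key]

theorem sq_add_sq_le_maxSingularValue (a b c e u v : ℝ) :
    (a * u + b * v) ^ 2 + (c * u + e * v) ^ 2
      ≤ (a ^ 2 + b ^ 2 + c ^ 2 + e ^ 2
          + √((a ^ 2 + b ^ 2 + c ^ 2 + e ^ 2) ^ 2 - 4 * (a * e - b * c) ^ 2)) / 2
        * (u ^ 2 + v ^ 2) := by
  have lagrange : (a ^ 2 + b ^ 2 + c ^ 2 + e ^ 2) ^ 2 - 4 * (a * e - b * c) ^ 2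
      = (a ^ 2 + c ^ 2 - (b ^ 2 + e ^ 2)) ^ 2 + 4 * (a * b + c * e) ^ 2 := by ring
  rw [lagrange]
  convert quadForm_le_maxEigenvalue (a ^ 2 + c ^ 2) (b ^ 2 + e ^ 2) (a * b + c * e) u v
    using 1 <;> ring

theorem l2_opNorm_fromBlocks_diagonal_le {n : Type*} [Fintype n] [DecidableEq n]
    (a b c e : n → ℝ) {R : ℝ} (hR : 0 ≤ R)
    (h : ∀ i u v,
      (a i * u + b i * v) ^ 2 + (c i * u + e i * v) ^ 2 ≤ R ^ 2 * (u ^ 2 + v ^ 2)) :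
    ‖fromBlocks (diagonal a) (diagonal b) (diagonal c) (diagonal e)‖ ≤ R := by
  rw [l2_opNorm_def]
  refine ContinuousLinearMap.opNorm_le_bound _ hR fun x => ?_
  rw [← pow_le_pow_iff_left₀ (norm_nonneg _) (by positivity) two_ne_zero, mul_pow,
    EuclideanSpace.norm_sq_eq, EuclideanSpace.norm_sq_eq]
  simp only [LinearEquiv.trans_apply, LinearMap.coe_toContinuousLinearMap', ofLp_toLpLin,
    toLin'_apply, fromBlocks_mulVec, Real.norm_eq_abs, sq_abs, Fintype.sum_sum_type, Sum.elim_inl,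
    Pi.add_apply, mulVec_diagonal, Function.comp_apply, Sum.elim_inr, ← Finset.sum_add_distrib,
    Finset.mul_sum]
  exact Finset.sum_le_sum fun i _ => h i _ _

theorem l2_opNorm_fromBlocks_conjStarAlgAut {𝕜 n : Type*} [RCLike 𝕜] [Fintype n]
    [DecidableEq n]
    (U : unitary (Matrix n n 𝕜)) (P Q S T : Matrix n n 𝕜) :
    ‖fromBlocks (Unitary.conjStarAlgAut 𝕜 _ U P) (Unitary.conjStarAlgAut 𝕜 _ U Q)
        (Unitary.conjStarAlgAut 𝕜 _ U S) (Unitary.conjStarAlgAut 𝕜 _ U T)‖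
      = ‖fromBlocks P Q S T‖ := by
  set W : Matrix (n ⊕ n) (n ⊕ n) 𝕜 := fromBlocks U 0 0 U
  have hstar :
      star W = fromBlocks (star (U : Matrix n n 𝕜)) 0 0 (star (U : Matrix n n 𝕜)) := by
    simp [W, star_eq_conjTranspose, fromBlocks_conjTranspose]
  have hW : W ∈ unitary (Matrix (n ⊕ n) (n ⊕ n) 𝕜) := by
    rw [← unitaryGroup, mem_unitaryGroup_iff, hstar, fromBlocks_multiply]
    simp
  have hconj : fromBlocks (Unitary.conjStarAlgAut 𝕜 _ U P) (Unitary.conjStarAlgAut 𝕜 _ U Q)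
        (Unitary.conjStarAlgAut 𝕜 _ U S) (Unitary.conjStarAlgAut 𝕜 _ U T)
      = W * fromBlocks P Q S T * star W := by
    simp [W, hstar, fromBlocks_multiply, Unitary.conjStarAlgAut_apply]
  rw [hconj, CStarRing.norm_mul_mem_unitary _ (Unitary.star_mem hW),
    CStarRing.norm_mem_unitary_mul _ hW]

theorem Rlam_nonneg (α β lam : ℝ) : 0 ≤ Rlam α β lam := by
  unfold Rlam; positivity

theorem Rlam_sq (α β lam : ℝ) :
    Rlam α β lam ^ 2
      = (Clam α β lam + √(Clam α β lam ^ 2 - 4 * β ^ 2 * (1 - α * lam) ^ 2)) / 2 := by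
  have hC : 0 ≤ Clam α β lam := by unfold Clam; positivity
  rw [Rlam, mul_pow, Real.sq_sqrt (by positivity), div_pow, Real.sq_sqrt zero_le_two]
  ring

theorem sq_add_sq_le_Rlam_sq (α β lam u v : ℝ) :
    ((1 - α * (1 + β) * lam) * u + β ^ 2 * v) ^ 2 + (-(α * lam) * u + β * v) ^ 2
      ≤ Rlam α β lam ^ 2 * (u ^ 2 + v ^ 2) := by
  convert sq_add_sq_le_maxSingularValue (1 - α * (1 + β) * lam) (β ^ 2) (-(α * lam)) β u v
    using 3
  rw [Rlam_sq, Clam]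
  ring_nf

theorem Rlam_le_sSup_image {μ L α β lam : ℝ} (hlam : lam ∈ Set.Icc μ L) :
    Rlam α β lam ≤ sSup ((fun lam => Rlam α β lam) '' Set.Icc μ L) :=
  le_csSup (isCompact_Icc.image (by unfold Rlam Clam; fun_prop)).bddAbove ⟨lam, hlam, rfl⟩

theorem stmt15_general {d : ℕ} (μ L α β : ℝ) (hμL : μ ≤ L)
    (H : Matrix (Fin d) (Fin d) ℝ) (hsymm : H.IsSymm)
    (hspec : spectrum ℝ H ⊆ Set.Icc μ L)
    (A : Matrix (Fin d ⊕ Fin d) (Fin d ⊕ Fin d) ℝ)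
    (hA : A = Matrix.fromBlocks (1 - (α * (1 + β)) • H) ((β ^ 2) • 1)
      (-(α • H)) (β • 1)) :
    spectralNorm2 A ≤ sSup ((fun lam => Rlam α β lam) '' Set.Icc μ L) := by
  have hH : H.IsHermitian := by rwa [IsHermitian, conjTranspose_eq_transpose_of_trivial]
  set φ := Unitary.conjStarAlgAut ℝ _ hH.eigenvectorUnitary
  set ev := hH.eigenvalues
  have hHD : H = φ (diagonal ev) := by
    simpa only [RCLike.ofReal_real_eq_id, Function.id_comp] using hH.spectral_theorem
  have hAconj : A = fromBlocks (φ (1 - (α * (1 + β)) • diagonal ev)) (φ ((β ^ 2) • 1))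
      (φ (-(α • diagonal ev))) (φ (β • 1)) := by
    simp only [hA, hHD, map_sub, map_smul, map_neg, map_one]
  rw [show spectralNorm2 A = ‖A‖ from rfl, hAconj, l2_opNorm_fromBlocks_conjStarAlgAut]
  have hdiag : fromBlocks (1 - (α * (1 + β)) • diagonal ev) ((β ^ 2) • 1)
        (-(α • diagonal ev)) (β • (1 : Matrix (Fin d) (Fin d) ℝ))
      = fromBlocks (diagonal fun i => 1 - α * (1 + β) * ev i) (diagonal fun _ => β ^ 2)
        (diagonal fun i => -(α * ev i)) (diagonal fun _ => β) := by
    congr 1 <;> ext i j <;> by_cases h : i = j <;> simp [h]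
  rw [hdiag]
  refine l2_opNorm_fromBlocks_diagonal_le _ _ _ _
    ((Rlam_nonneg α β μ).trans (Rlam_le_sSup_image ⟨le_rfl, hμL⟩)) fun i u v => ?_
  calc _ ≤ Rlam α β (ev i) ^ 2 * (u ^ 2 + v ^ 2) := sq_add_sq_le_Rlam_sq α β (ev i) u v
    _ ≤ _ := by
      gcongr
      exacts [Rlam_nonneg α β (ev i),
        Rlam_le_sSup_image (hspec (hH.eigenvalues_mem_spectrum_real i))]

/-- For `H` symmetric with all eigenvalues in `[μ, L]` and
`A = [[I − α(1+β)H, β²I], [−αH, βI]]`, the spectral norm of `A` satisfies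
`‖A‖ ≤ R(α, β) = max_{λ ∈ [μ, L]} R_λ(α, β)`. -/
theorem stmt15 {d : ℕ} (μ L α β : ℝ) (hμ : 0 < μ) (hμL : μ ≤ L) (hα : 0 < α)
    (H : Matrix (Fin d) (Fin d) ℝ) (hsymm : H.IsSymm)
    (hspec : spectrum ℝ H ⊆ Set.Icc μ L)
    (A : Matrix (Fin d ⊕ Fin d) (Fin d ⊕ Fin d) ℝ)
    (hA : A = Matrix.fromBlocks (1 - (α * (1 + β)) • H) ((β ^ 2) • 1)
      (-(α • H)) (β • 1)) :
    spectralNorm2 A ≤ sSup ((fun lam => Rlam α β lam) '' Set.Icc μ L) :=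
  stmt15_general μ L α β hμL H hsymm hspec A hA
end

section
/- Let 0 < μ < L, Q = L/μ > 1, α = 1/L, β = (√Q − 1)/(√Q + 1), and r = (√Q − 1)/√Q. Then for every integer k ≥ 1, the spectral radius of the 2×2 matrix B(L) B(μ)^k satisfies ρ(B(L) B(μ)^k) = r^{k+1} · k, where B(L) = [[0, β²], [−1, β]] and B(μ) = [[1 − α(1+β)μ, β²], [−αμ, β]]. In particular, if r^{k+1} k > 1 then this product has spectral radius exceeding 1. -/
/-!
With `q = √Q` one has `α L = 1` and `α μ = 1 / q²`. The first makes `B(L)` singular with zero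
trace; the second splits `B(μ) = r • 1 + N` with `N² = 0`, so `B(μ)^k = r^k • 1 + k r^(k-1) • N`.
Hence `B(L) B(μ)^k` is singular, its spectral radius is the absolute value of its trace, and that
trace is `k r^(k-1) tr(B(L) N) = -k r^(k+1)`.
-/

open Matrix

/-- The 2×2 matrix `B(λ)` from the analysis of Nesterov's method; with `α = 1/L` the
matrix `B(L)` has top-left entry `1 − α(1+β)L = −β`. -/
noncomputable def Bmat (α β lam : ℝ) : Matrix (Fin 2) (Fin 2) ℝ :=
  !![1 - α * (1 + β) * lam, β ^ 2; -(α * lam), β]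

/-- The spectral radius of a real square matrix: the maximum modulus of its complex
eigenvalues. -/
noncomputable def specRad {m : Type*} [Fintype m] [DecidableEq m]
    (A : Matrix m m ℝ) : ℝ :=
  sSup ((fun z : ℂ => ‖z‖) '' spectrum ℂ (A.map (algebraMap ℝ ℂ)))

theorem Matrix.spectrum_fin_two_of_det_eq_zero {K : Type*} [Field K]
    {A : Matrix (Fin 2) (Fin 2) K} (h : A.det = 0) : spectrum K A = {0, A.trace} := by
  ext z
  rw [mem_spectrum_iff_isRoot_charpoly, charpoly_fin_two, h]
  simp only [Polynomial.IsRoot.def, Polynomial.eval_add, Polynomial.eval_sub, Polynomial.eval_pow,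
    Polynomial.eval_mul, Polynomial.eval_X, Polynomial.eval_C, add_zero, Set.mem_insert_iff,
    Set.mem_singleton_iff]
  rw [sq, ← sub_mul, mul_eq_zero, sub_eq_zero, or_comm]

theorem specRad_fin_two_of_det_eq_zero {M : Matrix (Fin 2) (Fin 2) ℝ} (h : M.det = 0) :
    specRad M = |M.trace| := by
  have hdet : (M.map (algebraMap ℝ ℂ)).det = 0 := by
    rw [← RingHom.mapMatrix_apply, ← RingHom.map_det, h, map_zero]
  rw [specRad, spectrum_fin_two_of_det_eq_zero hdet, Set.image_pair, norm_zero,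
    ← AddMonoidHom.map_trace, Complex.coe_algebraMap, Complex.norm_real, Real.norm_eq_abs,
    csSup_pair, max_eq_right (abs_nonneg _)]

theorem smul_one_add_pow_succ_of_mul_self_eq_zero {R A : Type*} [CommSemiring R] [Semiring A]
    [Algebra R A] (r : R) {N : A} (hN : N * N = 0) (k : ℕ) :
    (r • 1 + N) ^ (k + 1) = r ^ (k + 1) • 1 + ((k + 1 : R) * r ^ k) • N := by
  induction k with
  | zero => simp
  | succ k ih =>
    rw [pow_succ, ih]
    simp only [add_mul, mul_add, smul_mul_assoc, mul_smul_comm, one_mul, mul_one, hN,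
      smul_zero, add_zero]
    push_cast
    module

theorem det_Bmat_of_mul_eq_one {α β lam : ℝ} (h : α * lam = 1) : (Bmat α β lam).det = 0 := by
  rw [Bmat, det_fin_two_of, mul_right_comm, h]
  ring

theorem trace_Bmat_of_mul_eq_one {α β lam : ℝ} (h : α * lam = 1) :
    (Bmat α β lam).trace = 0 := by
  rw [Bmat, trace_fin_two_of, mul_right_comm, h]
  ring

/-- The nilpotent part of `B(μ)` when `β = (q - 1)/(q + 1)` and `α μ = 1 / q²`. -/
noncomputable def nilpotentPart (q : ℝ) : Matrix (Fin 2) (Fin 2) ℝ :=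
  !![(q - 1) / (q * (q + 1)), ((q - 1) / (q + 1)) ^ 2; -(1 / q ^ 2), -((q - 1) / (q * (q + 1)))]

section

variable {q : ℝ} (hq : 0 < q)
include hq

theorem nilpotentPart_mul_self : nilpotentPart q * nilpotentPart q = 0 := by
  have : q + 1 ≠ 0 := by positivity
  rw [nilpotentPart, mul_fin_two, eta_fin_two 0]
  congrm !![?_, ?_; ?_, ?_] <;> rw [Matrix.zero_apply] <;> field_simp <;> ring

theorem Bmat_eq_smul_one_add_nilpotentPart {α μ : ℝ} (h : α * μ = 1 / q ^ 2) :
    Bmat α ((q - 1) / (q + 1)) μ = ((q - 1) / q) • 1 + nilpotentPart q := by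
  have : q + 1 ≠ 0 := by positivity
  rw [Bmat, nilpotentPart, one_fin_two, smul_of, of_add_of, mul_right_comm, h]
  simp only [smul_cons, smul_empty, cons_add_cons, empty_add_empty, smul_eq_mul, mul_one,
    mul_zero, zero_add]
  congrm !![?_, ?_; ?_, ?_] <;> field_simp <;> ring

theorem trace_Bmat_mul_nilpotentPart {α L : ℝ} (h : α * L = 1) :
    (Bmat α ((q - 1) / (q + 1)) L * nilpotentPart q).trace = -((q - 1) / q) ^ 2 := by
  have : q + 1 ≠ 0 := by positivity
  rw [Bmat, nilpotentPart, mul_fin_two, trace_fin_two_of, mul_right_comm, h]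
  field_simp
  ring

theorem trace_Bmat_mul_Bmat_pow_succ {α μ L : ℝ} (hL : α * L = 1) (hμ : α * μ = 1 / q ^ 2)
    (k : ℕ) :
    (Bmat α ((q - 1) / (q + 1)) L * Bmat α ((q - 1) / (q + 1)) μ ^ (k + 1)).trace =
      -((k + 1) * ((q - 1) / q) ^ (k + 2)) := by
  rw [Bmat_eq_smul_one_add_nilpotentPart hq hμ,
    smul_one_add_pow_succ_of_mul_self_eq_zero _ (nilpotentPart_mul_self hq), mul_add,
    mul_smul_comm, mul_smul_comm, mul_one, trace_add, trace_smul, trace_smul,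
    trace_Bmat_of_mul_eq_one hL, trace_Bmat_mul_nilpotentPart hq hL, smul_eq_mul, smul_eq_mul]
  ring

end

theorem stmt19_general (μ L : ℝ)
    (Q : ℝ) (hQ : Q = L / μ) (hQ1 : 1 < Q)
    (α β r : ℝ) (hα : α = 1 / L) (hβ : β = (Real.sqrt Q - 1) / (Real.sqrt Q + 1))
    (hr : r = (Real.sqrt Q - 1) / Real.sqrt Q) :
    ∀ k : ℕ, 1 ≤ k →
      specRad (Bmat α β L * (Bmat α β μ) ^ k) = r ^ (k + 1) * (k : ℝ) ∧
      (1 < r ^ (k + 1) * (k : ℝ) →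
        1 < specRad (Bmat α β L * (Bmat α β μ) ^ k)) := by
  intro k hk
  obtain ⟨m, rfl⟩ := Nat.exists_eq_add_of_le' hk
  have hq : 1 < Real.sqrt Q := Real.lt_sqrt_of_sq_lt (by linarith)
  have hL : L ≠ 0 := by
    rintro rfl
    rw [hQ, zero_div] at hQ1
    linarith
  have hαL : α * L = 1 := by rw [hα, one_div_mul_cancel hL]
  have hαμ : α * μ = 1 / Real.sqrt Q ^ 2 := by
    rw [Real.sq_sqrt (by linarith), hα, hQ, one_div_div, one_div_mul_eq_div]
  have hr0 : 0 ≤ r := hr ▸ div_nonneg (by linarith) (Real.sqrt_nonneg Q)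
  have hspec : specRad (Bmat α β L * Bmat α β μ ^ (m + 1)) = r ^ (m + 1 + 1) * ↑(m + 1) := by
    subst hβ hr
    rw [specRad_fin_two_of_det_eq_zero (by rw [det_mul, det_Bmat_of_mul_eq_one hαL, zero_mul]),
      trace_Bmat_mul_Bmat_pow_succ (by linarith) hαL hαμ, abs_neg,
      abs_of_nonneg (by positivity)]
    push_cast
    ring
  exact ⟨hspec, fun h => hspec ▸ h⟩

/-- With `α = 1/L`, `β = (√Q−1)/(√Q+1)`, `r = (√Q−1)/√Q`, for every
integer `k ≥ 1` the spectral radius of `B(L) B(μ)^k` equals `r^{k+1} · k`; in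
particular if `r^{k+1} k > 1` then this product has spectral radius exceeding `1`. -/
theorem stmt19 (μ L : ℝ) (hμ : 0 < μ) (hμL : μ < L)
    (Q : ℝ) (hQ : Q = L / μ) (hQ1 : 1 < Q)
    (α β r : ℝ) (hα : α = 1 / L) (hβ : β = (Real.sqrt Q - 1) / (Real.sqrt Q + 1))
    (hr : r = (Real.sqrt Q - 1) / Real.sqrt Q) :
    ∀ k : ℕ, 1 ≤ k →
      specRad (Bmat α β L * (Bmat α β μ) ^ k) = r ^ (k + 1) * (k : ℝ) ∧
      (1 < r ^ (k + 1) * (k : ℝ) →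
        1 < specRad (Bmat α β L * (Bmat α β μ) ^ k)) :=
  stmt19_general μ L Q hQ hQ1 α β r hα hβ hr
end
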